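/- Suppose the atypical roots of λ are totally q-related, i.e., c_{s,t} = q for all 1 ≤ s < t ≤ r. Then #Θ^λ = C_{r+1}, the (r+1)-th Catalan number. -/

import Mathlib

/-- The three possible relationships between two atypical roots. -/
inductive NQC
  | n : NQC
  | q : NQC
  | c : NQC
deriving DecidableEq

/-- The set `Θ^λ` of Definition 3.4, for an `r`-fold atypical weight whose
nqc-relations are given by `crel` (with `crel s t` for `1 ≤ s ≤ t ≤ r`).
Tuples are modelled as functions `θ : ℕ → ℕ` supported on `{1,...,r}` with `θ s ≤ s`.
For each `s` with `θ s ≠ 0` the conditions (3.13)-(3.16) must hold: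
(3.13) `c_{s-θ_s,s} ≠ c` (omitted when `θ_s = s`) and `c_{s+1-θ_s,s} ≠ n`;
for every `p ∈ [s+1-θ_s, s-1]`:
(3.14) `θ_p ≤ θ_s - s + p`, with equality only if `c_{p,s} = c`;
(3.15) if `c_{p,s} ≠ n` then `θ_p ≠ 0` or there is `p' ∈ [p+1,s]` with `c_{p,p'} = q`
and `θ_{p'} ≥ p'+1-p`,
(3.16) with the exception that `p = s+1-θ_s < s` and `c_{p,s} = q` forces `θ_p = 0`. -/
def ThetaSet (r : ℕ) (crel : ℕ → ℕ → NQC) : Set (ℕ → ℕ) :=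
  {θ | (∀ s, 1 ≤ s → s ≤ r → θ s ≤ s) ∧ (∀ s, ¬(1 ≤ s ∧ s ≤ r) → θ s = 0) ∧
    ∀ s, 1 ≤ s → s ≤ r → θ s ≠ 0 →
      (θ s < s → crel (s - θ s) s ≠ NQC.c) ∧
      crel (s + 1 - θ s) s ≠ NQC.n ∧
      ∀ p, s + 1 - θ s ≤ p → p ≤ s - 1 →
        (θ p + s ≤ θ s + p) ∧
        (θ p + s = θ s + p → crel p s = NQC.c) ∧
        (crel p s ≠ NQC.n →
          ((p = s + 1 - θ s ∧ crel p s = NQC.q) → θ p = 0) ∧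
          (¬(p = s + 1 - θ s ∧ crel p s = NQC.q) →
            θ p ≠ 0 ∨ ∃ p', p + 1 ≤ p' ∧ p' ≤ s ∧ crel p p' = NQC.q ∧ p' + 1 ≤ θ p' + p))}

/-- The nesting condition. -/
def Nest (θ : ℕ → ℕ) : Prop :=
  ∀ s, θ s ≠ 0 → ∀ p, s + 1 - θ s ≤ p → p ≤ s - 1 → θ p + s < θ s + p

def USet (m : ℕ) : Set (ℕ → ℕ) := {θ | (∀ j, θ j ≠ 0 → θ j < j ∧ j ≤ m) ∧ Nest θ}

def TSet (r : ℕ) : Set (ℕ → ℕ) := {θ | (∀ j, θ j ≠ 0 → θ j ≤ j ∧ j ≤ r) ∧ Nest θ}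

def treeFun : BinaryTree Unit → ℕ → ℕ
  | BinaryTree.nil => fun _ => 0
  | BinaryTree.node _ l r => fun j =>
      if j = l.numNodes + r.numNodes + 1 then (if r.numNodes = 0 then 0 else l.numNodes + 1)
      else if j ≤ r.numNodes then treeFun r j else treeFun l (j - r.numNodes)

lemma treeFun_mem (t : BinaryTree Unit) : treeFun t ∈ USet t.numNodes := by
  induction t with
  | nil =>
    exact ⟨fun j hj => absurd rfl hj, fun s hs => absurd rfl hs⟩
  | node x l r ihl ihr =>
    obtain ⟨hlsupp, hlnest⟩ := ihl
    obtain ⟨hrsupp, hrnest⟩ := ihr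
    set a := l.numNodes with ha
    set b := r.numNodes with hb
    have hnum : (BinaryTree.node x l r).numNodes = a + b + 1 := rfl
    rw [hnum]
    have hval : ∀ j, treeFun (BinaryTree.node x l r) j =
        if j = a + b + 1 then (if b = 0 then 0 else a + 1)
        else if j ≤ b then treeFun r j else treeFun l (j - b) := fun j => rfl
    constructor
    · intro j hj
      rw [hval] at hj
      rw [hval j]
      by_cases hjm : j = a + b + 1
      · rw [if_pos hjm] at hj ⊢
        by_cases hb0 : b = 0
        · rw [if_pos hb0] at hj; exact absurd rfl hj
        · rw [if_neg hb0]; omega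
      · rw [if_neg hjm] at hj ⊢
        by_cases hjb : j ≤ b
        · rw [if_pos hjb] at hj ⊢
          have := hrsupp j hj
          omega
        · rw [if_neg hjb] at hj ⊢
          have := hlsupp _ hj
          omega
    · intro s hs p hp1 hp2
      rw [hval] at hs
      rw [hval s] at hp1
      rw [hval p, hval s]
      by_cases hsm : s = a + b + 1
      · rw [if_pos hsm] at hs hp1 ⊢
        by_cases hb0 : b = 0
        · rw [if_pos hb0] at hs; exact absurd rfl hs
        · rw [if_neg hb0] at hs hp1 ⊢
          rw [if_neg (show ¬ p = a + b + 1 by omega), if_neg (show ¬ p ≤ b by omega)]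
          rcases Nat.eq_zero_or_pos (treeFun l (p - b)) with h0 | hpos
          · omega
          · have := hlsupp (p - b) (by omega)
            omega
      · rw [if_neg hsm] at hs hp1 ⊢
        by_cases hsb : s ≤ b
        · rw [if_pos hsb] at hs hp1 ⊢
          have hs1 := hrsupp s hs
          rw [if_neg (show ¬ p = a + b + 1 by omega), if_pos (show p ≤ b by omega)]
          exact hrnest s hs p hp1 hp2
        · rw [if_neg hsb] at hs hp1 ⊢
          have hsup := hlsupp _ hs
          rw [if_neg (show ¬ p = a + b + 1 by omega), if_neg (show ¬ p ≤ b by omega)]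
          have key := hlnest (s - b) hs (p - b) (by omega) (by omega)
          omega

lemma treeFun_zero (t : BinaryTree Unit) {j : ℕ} (h : j = 0 ∨ t.numNodes < j) : treeFun t j = 0 := by
  rcases Nat.eq_zero_or_pos (treeFun t j) with h0 | hpos
  · exact h0
  · have := (treeFun_mem t).1 j (by omega)
    omega

lemma treeFun_inj : ∀ t₁ t₂ : BinaryTree Unit, t₁.numNodes = t₂.numNodes →
    treeFun t₁ = treeFun t₂ → t₁ = t₂ := by
  intro t₁
  induction t₁ with
  | nil =>
    intro t₂ hn _
    cases t₂ with
    | nil => rfl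
    | node y l r =>
      have hn' : (0:ℕ) = l.numNodes + r.numNodes + 1 := hn
      omega
  | node x l₁ r₁ ihl ihr =>
    intro t₂ hn hf
    cases t₂ with
    | nil =>
      have hn' : l₁.numNodes + r₁.numNodes + 1 = (0:ℕ) := hn
      omega
    | node y l₂ r₂ =>
      set a₁ := l₁.numNodes; set b₁ := r₁.numNodes
      set a₂ := l₂.numNodes; set b₂ := r₂.numNodes
      have hm : a₁ + b₁ + 1 = a₂ + b₂ + 1 := hn
      have hv1 : ∀ j, treeFun (BinaryTree.node x l₁ r₁) j =
          if j = a₁ + b₁ + 1 then (if b₁ = 0 then 0 else a₁ + 1)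
          else if j ≤ b₁ then treeFun r₁ j else treeFun l₁ (j - b₁) := fun _ => rfl
      have hv2 : ∀ j, treeFun (BinaryTree.node y l₂ r₂) j =
          if j = a₂ + b₂ + 1 then (if b₂ = 0 then 0 else a₂ + 1)
          else if j ≤ b₂ then treeFun r₂ j else treeFun l₂ (j - b₂) := fun _ => rfl
      have hfm : (if b₁ = 0 then 0 else a₁ + 1) = (if b₂ = 0 then 0 else a₂ + 1) := by
        have h := congrFun hf (a₁ + b₁ + 1)
        rw [hv1, hv2] at h
        rw [if_pos (rfl : a₁ + b₁ + 1 = a₁ + b₁ + 1)] at h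
        rw [if_pos (hm : a₁ + b₁ + 1 = a₂ + b₂ + 1)] at h
        exact h
      have hab : a₁ = a₂ ∧ b₁ = b₂ := by split_ifs at hfm <;> omega
      obtain ⟨haa, hbb⟩ := hab
      have hr : treeFun r₁ = treeFun r₂ := by
        funext j
        by_cases hjb : j ≤ b₁
        · have h := congrFun hf j
          rw [hv1, hv2] at h
          rw [if_neg (show ¬ j = a₁ + b₁ + 1 by omega), if_pos hjb,
            if_neg (show ¬ j = a₂ + b₂ + 1 by omega),
            if_pos (show j ≤ b₂ by omega)] at h
          exact h
        · rw [treeFun_zero r₁ (Or.inr (by omega)), treeFun_zero r₂ (Or.inr (by omega))]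
      have hl : treeFun l₁ = treeFun l₂ := by
        funext j
        by_cases hj0 : j = 0
        · rw [hj0, treeFun_zero l₁ (Or.inl rfl), treeFun_zero l₂ (Or.inl rfl)]
        by_cases hja : j ≤ a₁
        · have h := congrFun hf (j + b₁)
          rw [hv1, hv2] at h
          rw [if_neg (show ¬ j + b₁ = a₁ + b₁ + 1 by omega),
            if_neg (show ¬ j + b₁ ≤ b₁ by omega),
            if_neg (show ¬ j + b₁ = a₂ + b₂ + 1 by omega),
            if_neg (show ¬ j + b₁ ≤ b₂ by omega)] at h
          have e1 : j + b₁ - b₁ = j := by omega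
          have e2 : j + b₁ - b₂ = j := by omega
          rw [e1, e2] at h
          exact h
        · rw [treeFun_zero l₁ (Or.inr (by omega)), treeFun_zero l₂ (Or.inr (by omega))]
      rw [ihl l₂ haa hl, ihr r₂ hbb hr]

lemma treeFun_surj : ∀ m : ℕ, ∀ θ ∈ USet m, ∃ t : BinaryTree Unit, t.numNodes = m ∧ treeFun t = θ := by
  intro m
  induction m using Nat.strong_induction_on with
  | _ m ih =>
    intro θ hθ
    obtain ⟨hsupp, hnest⟩ := hθ
    rcases Nat.eq_zero_or_pos m with hm0 | hm1
    · refine ⟨BinaryTree.nil, by simp [hm0], ?_⟩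
      funext j
      rcases Nat.eq_zero_or_pos (θ j) with h0 | hpos
      · exact h0.symm
      · exfalso; have := hsupp j (by omega); omega
    · set k := θ m with hk
      by_cases hk0 : k = 0
      · -- right subtree empty
        have hθ' : θ ∈ USet (m - 1) := by
          refine ⟨fun j hj => ?_, hnest⟩
          have := hsupp j hj
          have hjm : j ≠ m := fun h => by rw [h] at hj; exact hj hk0
          omega
        obtain ⟨l, hln, hlf⟩ := ih (m - 1) (by omega) θ hθ'
        refine ⟨BinaryTree.node () l BinaryTree.nil, by simp; omega, ?_⟩
        have hval : ∀ j, treeFun (BinaryTree.node () l BinaryTree.nil) j =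
            if j = l.numNodes + 0 + 1 then 0
            else if j ≤ 0 then 0 else treeFun l (j - 0) := fun _ => rfl
        funext j
        rw [hval]
        by_cases hjm : j = m
        · rw [if_pos (show j = l.numNodes + 0 + 1 by omega)]
          subst hjm
          omega
        · rw [if_neg (show ¬ j = l.numNodes + 0 + 1 by omega)]
          by_cases hj0 : j ≤ 0
          · rw [if_pos hj0]
            rcases Nat.eq_zero_or_pos (θ j) with h0 | hpos
            · exact h0.symm
            · exfalso; have := hsupp j (by omega); omega
          · rw [if_neg hj0, hlf]
            congr 1
      · -- θ m = k ≥ 1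
        have hkm : k < m := (hsupp m (by omega)).1
        set b := m - k with hbdef
        set a := k - 1 with hadef
        have hb1 : 1 ≤ b := by omega
        have hinner : ∀ p, b + 1 ≤ p → p ≤ m - 1 → θ p + b < p := by
          intro p h1 h2
          have := hnest m (by omega) p (by omega) (by omega)
          omega
        set θl : ℕ → ℕ := fun j => if 1 ≤ j ∧ j ≤ a then θ (j + b) else 0 with hθl
        set θr : ℕ → ℕ := fun j => if j ≤ b then θ j else 0 with hθr
        have hθlval : ∀ j, θl j = if 1 ≤ j ∧ j ≤ a then θ (j + b) else 0 := fun _ => rfl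
        have hθrval : ∀ j, θr j = if j ≤ b then θ j else 0 := fun _ => rfl
        have hθlmem : θl ∈ USet a := by
          constructor
          · intro j hj
            rw [hθlval] at hj
            rw [hθlval j]
            by_cases hja : 1 ≤ j ∧ j ≤ a
            · rw [if_pos hja] at hj ⊢
              have := hinner (j + b) (by omega) (by omega)
              omega
            · rw [if_neg hja] at hj; exact absurd rfl hj
          · intro s hs p hp1 hp2
            rw [hθlval] at hs
            rw [hθlval s] at hp1
            rw [hθlval p, hθlval s]
            by_cases hsa : 1 ≤ s ∧ s ≤ a
            · rw [if_pos hsa] at hs hp1 ⊢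
              have hθs : θ (s + b) + b < s + b := hinner (s + b) (by omega) (by omega)
              have hkey := hnest (s + b) hs (p + b) (by omega) (by omega)
              rw [if_pos (show 1 ≤ p ∧ p ≤ a by omega)]
              omega
            · rw [if_neg hsa] at hs; exact absurd rfl hs
        have hθrmem : θr ∈ USet b := by
          constructor
          · intro j hj
            rw [hθrval] at hj
            rw [hθrval j]
            by_cases hjb : j ≤ b
            · rw [if_pos hjb] at hj ⊢
              have := hsupp j hj
              omega
            · rw [if_neg hjb] at hj; exact absurd rfl hj
          · intro s hs p hp1 hp2
            rw [hθrval] at hs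
            rw [hθrval s] at hp1
            rw [hθrval p, hθrval s]
            by_cases hsb : s ≤ b
            · rw [if_pos hsb] at hs hp1 ⊢
              have hs1 := hsupp s hs
              have hkey := hnest s hs p hp1 hp2
              rw [if_pos (show p ≤ b by omega)]
              omega
            · rw [if_neg hsb] at hs; exact absurd rfl hs
        obtain ⟨l, hln, hlf⟩ := ih a (by omega) θl hθlmem
        obtain ⟨tr, hrn, hrf⟩ := ih b (by omega) θr hθrmem
        refine ⟨BinaryTree.node () l tr, by simp; omega, ?_⟩
        have hval : ∀ j, treeFun (BinaryTree.node () l tr) j =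
            if j = l.numNodes + tr.numNodes + 1 then (if tr.numNodes = 0 then 0 else l.numNodes + 1)
            else if j ≤ tr.numNodes then treeFun tr j
            else treeFun l (j - tr.numNodes) := fun _ => rfl
        funext j
        rw [hval]
        by_cases hjm : j = m
        · rw [if_pos (show j = l.numNodes + tr.numNodes + 1 by omega),
            if_neg (show ¬ tr.numNodes = 0 by omega)]
          subst hjm
          omega
        · rw [if_neg (show ¬ j = l.numNodes + tr.numNodes + 1 by omega)]
          by_cases hjb : j ≤ b
          · rw [if_pos (show j ≤ tr.numNodes by omega), hrf, hθrval, if_pos hjb]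
          · rw [if_neg (show ¬ j ≤ tr.numNodes by omega), hlf, hθlval, hrn]
            by_cases hja : 1 ≤ j - b ∧ j - b ≤ a
            · rw [if_pos hja]
              congr 1
              omega
            · rw [if_neg hja]
              rcases Nat.eq_zero_or_pos (θ j) with h0 | hpos
              · exact h0.symm
              · exfalso; have := hsupp j (by omega); omega

lemma card_USet (m : ℕ) : Nat.card (USet m) = catalan m := by
  have e : {t : BinaryTree Unit // t.numNodes = m} ≃ USet m := by
    refine Equiv.ofBijective (fun t => ⟨treeFun t.1, by have h := treeFun_mem t.1; rwa [t.2] at h⟩) ⟨?_, ?_⟩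
    · rintro ⟨t₁, h₁⟩ ⟨t₂, h₂⟩ h
      exact Subtype.ext (treeFun_inj t₁ t₂ (h₁.trans h₂.symm)
        (congrArg Subtype.val h))
    · rintro ⟨θ, hθ⟩
      obtain ⟨t, ht, hf⟩ := treeFun_surj m θ hθ
      exact ⟨⟨t, ht⟩, Subtype.ext hf⟩
  rw [← Nat.card_congr e]
  rw [Nat.card_congr (Equiv.subtypeEquivRight
    (fun t => (BinaryTree.mem_treesOfNumNodesEq (x := t) (n := m)).symm))]
  rw [Nat.card_eq_finsetCard, BinaryTree.treesOfNumNodesEq_card_eq_catalan]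

def shiftUp (θ : ℕ → ℕ) : ℕ → ℕ := fun j => θ (j - 1)
def shiftDown (θ : ℕ → ℕ) : ℕ → ℕ := fun j => θ (j + 1)

lemma shiftUp_mem {r : ℕ} {θ : ℕ → ℕ} (h : θ ∈ TSet r) : shiftUp θ ∈ USet (r + 1) := by
  obtain ⟨hsupp, hnest⟩ := h
  constructor
  · intro j hj
    have hj' : θ (j - 1) ≠ 0 := hj
    have := hsupp (j - 1) hj'
    show θ (j - 1) < j ∧ j ≤ r + 1
    omega
  · intro s hs p hp1 hp2
    have hs' : θ (s - 1) ≠ 0 := hs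
    have hsup := hsupp (s - 1) hs'
    have hp1' : s + 1 - θ (s - 1) ≤ p := hp1
    have h0 : θ 0 = 0 := by
      rcases Nat.eq_zero_or_pos (θ 0) with h | h
      · exact h
      · exfalso; have := hsupp 0 (by omega); omega
    have hs2 : 2 ≤ s := by
      by_contra hc
      have he : s - 1 = 0 := by omega
      rw [he] at hs'
      exact hs' h0
    have key := hnest (s - 1) hs' (p - 1) (by omega) (by omega)
    show θ (p - 1) + s < θ (s - 1) + p
    omega

lemma shiftDown_mem {r : ℕ} {θ : ℕ → ℕ} (h : θ ∈ USet (r + 1)) : shiftDown θ ∈ TSet r := by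
  obtain ⟨hsupp, hnest⟩ := h
  constructor
  · intro j hj
    have hj' : θ (j + 1) ≠ 0 := hj
    have := hsupp (j + 1) hj'
    show θ (j + 1) ≤ j ∧ j ≤ r
    omega
  · intro s hs p hp1 hp2
    have hs' : θ (s + 1) ≠ 0 := hs
    have hsup := hsupp (s + 1) hs'
    have hp1' : s + 1 - θ (s + 1) ≤ p := hp1
    have key := hnest (s + 1) hs' (p + 1) (by omega) (by omega)
    show θ (p + 1) + s < θ (s + 1) + p
    omega

lemma card_TSet (r : ℕ) : Nat.card (TSet r) = catalan (r + 1) := by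
  rw [← card_USet (r + 1)]
  refine Nat.card_congr ⟨fun θ => ⟨shiftUp θ.1, shiftUp_mem θ.2⟩,
    fun θ => ⟨shiftDown θ.1, shiftDown_mem θ.2⟩, ?_, ?_⟩
  · rintro ⟨θ, hθ⟩
    apply Subtype.ext
    funext j
    show θ (j + 1 - 1) = θ j
    rfl
  · rintro ⟨θ, hsupp, hnest⟩
    apply Subtype.ext
    funext j
    show θ (j - 1 + 1) = θ j
    cases j with
    | zero =>
      have h1 : θ 1 = 0 := by
        rcases Nat.eq_zero_or_pos (θ 1) with h | h
        · exact h
        · exfalso; have := hsupp 1 (by omega); omega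
      have h0 : θ 0 = 0 := by
        rcases Nat.eq_zero_or_pos (θ 0) with h | h
        · exact h
        · exfalso; have := hsupp 0 (by omega); omega
      show θ 1 = θ 0
      rw [h1, h0]
    | succ n => congr 1

lemma thetaSet_eq_TSet (r : ℕ) (crel : ℕ → ℕ → NQC)
    (hdiag : ∀ s, 1 ≤ s → s ≤ r → crel s s = NQC.q)
    (htot : ∀ s t, 1 ≤ s → s < t → t ≤ r → crel s t = NQC.q) :
    ThetaSet r crel = TSet r := by
  ext θ
  constructor
  · rintro ⟨h1, h2, h3⟩
    constructor
    · intro j hj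
      have hj1 : 1 ≤ j ∧ j ≤ r := by
        by_contra h
        exact hj (h2 j h)
      exact ⟨h1 j hj1.1 hj1.2, hj1.2⟩
    · intro s hs p hp1 hp2
      have hs1 : 1 ≤ s ∧ s ≤ r := by
        by_contra h
        exact hs (h2 s h)
      obtain ⟨hle, heqc, _⟩ := (h3 s hs1.1 hs1.2 hs).2.2 p hp1 hp2
      have hθs := h1 s hs1.1 hs1.2
      have hne : θ p + s ≠ θ s + p := by
        intro he
        have hc := heqc he
        have hq := htot p s (by omega) (by omega) hs1.2
        rw [hq] at hc
        exact NQC.noConfusion hc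
      omega
  · rintro ⟨hsupp, hnest⟩
    have hθle : ∀ s, θ s ≤ s := by
      intro s
      rcases Nat.eq_zero_or_pos (θ s) with h | h
      · omega
      · exact (hsupp s (by omega)).1
    refine ⟨fun s _ _ => hθle s, ?_, ?_⟩
    · intro s hnot
      by_contra h
      have := hsupp s h
      exact hnot ⟨by omega, this.2⟩
    · intro s hs1 hs2 hs0
      have hθs : θ s ≤ s := hθle s
      refine ⟨?_, ?_, ?_⟩
      · intro hlt
        rw [htot (s - θ s) s (by omega) (by omega) hs2]
        decide
      · by_cases h : θ s = 1
        · have he : s + 1 - θ s = s := by omega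
          rw [he, hdiag s hs1 hs2]
          decide
        · rw [htot (s + 1 - θ s) s (by omega) (by omega) hs2]
          decide
      · intro p hp1 hp2
        have hp0 : 1 ≤ p := by omega
        have hps : p < s := by omega
        have key := hnest s hs0 p hp1 hp2
        refine ⟨by omega, fun he => absurd he (by omega), fun _ => ⟨?_, fun _ => ?_⟩⟩
        · intro h
          obtain ⟨hpe, -⟩ := h
          omega
        · exact Or.inr ⟨s, by omega, le_refl s, htot p s hp0 hps hs2, by omega⟩

/-- If the atypical roots of `λ` are totally q-related, then `#Θ^λ = C_{r+1}`,
the `(r+1)`-th Catalan number. -/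
theorem thetaSet_totally_q (r : ℕ) (crel : ℕ → ℕ → NQC)
    (hdiag : ∀ s, 1 ≤ s → s ≤ r → crel s s = NQC.q)
    (htot : ∀ s t, 1 ≤ s → s < t → t ≤ r → crel s t = NQC.q) :
    Nat.card (ThetaSet r crel) = catalan (r + 1) := by
  rw [thetaSet_eq_TSet r crel hdiag htot]
  exact card_TSet r
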